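/- arXiv:math/0609532 — 2 statements merged into one kernel-verified Lean document; each statement's English description precedes it below -/
import Mathlib

section
/- For every real number c, if the number of ordered pairs counted by N^+ satisfies limsup_{n→∞} (sup_χ |N^+(n,χ)|)/n² ≤ c (the supremum taken over all 2-colorings χ of {1,…,n}), then liminf_{n→∞} V(n)/n² ≥ (1/2)·(3/8 − c). -/
/-- The number of monochromatic 3-term arithmetic progressions in `{1,…,n}` under the
2-coloring `χ`: pairs `(a,d)` of positive integers with `a + 2d ≤ n` and
`χ a = χ (a+d) = χ (a+2d)`. -/
def mono3AP (n : ℕ) (χ : ℕ → Fin 2) : ℕ :=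
  ((Finset.Icc 1 n ×ˢ Finset.Icc 1 n).filter
    (fun p => p.1 + 2 * p.2 ≤ n ∧ χ p.1 = χ (p.1 + p.2) ∧ χ p.1 = χ (p.1 + 2 * p.2))).card

/-- `V(n)`: the minimum of `V(n,χ)` over all 2-colorings of `{1,…,n}`. -/
noncomputable def Vmin (n : ℕ) : ℕ := sInf {k | ∃ χ : ℕ → Fin 2, mono3AP n χ = k}

/-- `N^+(n,χ)`: ordered pairs `(a,b) ∈ {1,…,n}²` with `χ a ≠ χ b` and `1 ≤ 2b - a ≤ n`. -/
def Nplus (n : ℕ) (χ : ℕ → Fin 2) : Finset (ℕ × ℕ) :=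
  (Finset.Icc 1 n ×ˢ Finset.Icc 1 n).filter
    (fun p => χ p.1 ≠ χ p.2 ∧ 1 ≤ 2 * (p.2 : ℤ) - (p.1 : ℤ) ∧ 2 * (p.2 : ℤ) - (p.1 : ℤ) ≤ n)

/-- The supremum of `|N^+(n,χ)|` over all 2-colorings `χ` of `{1,…,n}`. -/
noncomputable def NplusSup (n : ℕ) : ℕ := sSup {k | ∃ χ : ℕ → Fin 2, (Nplus n χ).card = k}

/-!
For a progression `(a, a + d, a + 2d)` in a 2-colouring, twice the indicator of being
monochromatic plus the number of its bichromatic pairs is always `2`. Summed over the `≈ n²/4`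
progressions, the bichromatic pairs `{a, a + d}` and `{a + d, a + 2d}` are exactly the pairs
(end term, middle term) counted by `N⁺(n, χ)`, while a bichromatic pair `{a, a + 2d}` is a pair
of equal parity and different colours, of which there are at most `≈ n²/8`. Hence
`2 V(n) ≥ n²/2 - n²/8 - sup_χ |N⁺(n, χ)| - O(n)`.
-/

open Finset Filter

def threeAPs (n : ℕ) : Finset (ℕ × ℕ) :=
  {p ∈ Icc 1 n ×ˢ Icc 1 n | p.1 + 2 * p.2 ≤ n}

@[simp]
theorem mem_threeAPs {n : ℕ} {p : ℕ × ℕ} :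
    p ∈ threeAPs n ↔ 1 ≤ p.1 ∧ 1 ≤ p.2 ∧ p.1 + 2 * p.2 ≤ n := by
  simp only [threeAPs, mem_filter, mem_product, mem_Icc]
  omega

theorem mem_Nplus {n : ℕ} {χ : ℕ → Fin 2} {p : ℕ × ℕ} :
    p ∈ Nplus n χ ↔ (1 ≤ p.1 ∧ p.1 ≤ n) ∧ (1 ≤ p.2 ∧ p.2 ≤ n) ∧ χ p.1 ≠ χ p.2 ∧
      1 ≤ 2 * (p.2 : ℤ) - p.1 ∧ 2 * (p.2 : ℤ) - p.1 ≤ n := by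
  simp only [Nplus, mem_filter, mem_product, mem_Icc, and_assoc]

theorem mono3AP_eq_card_filter (n : ℕ) (χ : ℕ → Fin 2) :
    mono3AP n χ =
      #{p ∈ threeAPs n | χ p.1 = χ (p.1 + p.2) ∧ χ p.1 = χ (p.1 + 2 * p.2)} := by
  rw [mono3AP, threeAPs, filter_filter]

theorem Fin.two_mul_ite_eq_and_eq_add_ite_ne (x y z : Fin 2) :
    2 * (if x = y ∧ x = z then 1 else 0) + (if x ≠ z then 1 else 0) +
      ((if x ≠ y then 1 else 0) + (if y ≠ z then 1 else 0)) = 2 := by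
  fin_cases x <;> fin_cases y <;> fin_cases z <;> rfl

theorem two_mul_mono3AP_add (n : ℕ) (χ : ℕ → Fin 2) :
    2 * mono3AP n χ + #{p ∈ threeAPs n | χ p.1 ≠ χ (p.1 + 2 * p.2)} +
      (#{p ∈ threeAPs n | χ p.1 ≠ χ (p.1 + p.2)} +
        #{p ∈ threeAPs n | χ (p.1 + p.2) ≠ χ (p.1 + 2 * p.2)}) =
      2 * #(threeAPs n) := by
  simp only [mono3AP_eq_card_filter, card_filter, mul_sum, ← sum_add_distrib,
    Fin.two_mul_ite_eq_and_eq_add_ite_ne, sum_const, smul_eq_mul, mul_comm]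

theorem card_Nplus_filter_lt (n : ℕ) (χ : ℕ → Fin 2) :
    #{p ∈ Nplus n χ | p.1 < p.2} = #{p ∈ threeAPs n | χ p.1 ≠ χ (p.1 + p.2)} := by
  symm
  refine card_bij (fun p _ => (p.1, p.1 + p.2)) ?_ ?_ ?_
  · rintro ⟨a, d⟩ h
    simp only [mem_filter, mem_threeAPs, mem_Nplus] at h ⊢
    refine ⟨⟨⟨by omega, by omega⟩, ⟨by omega, by omega⟩, h.2, by push_cast; omega,
      by push_cast; omega⟩, by omega⟩
  · rintro ⟨a, d⟩ - ⟨a', d'⟩ - h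
    simp only [Prod.mk.injEq] at h
    ext <;> simp only <;> omega
  · rintro ⟨a, b⟩ h
    simp only [mem_filter, mem_Nplus] at h
    obtain ⟨d, rfl⟩ := Nat.exists_eq_add_of_lt h.2
    refine ⟨(a, d + 1), ?_, by simp [add_assoc]⟩
    simp only [mem_filter, mem_threeAPs, ← add_assoc]
    refine ⟨⟨by omega, by omega, ?_⟩, h.1.2.2.1⟩
    have := h.1.2.2.2.2
    push_cast at this
    omega

theorem card_Nplus_filter_gt (n : ℕ) (χ : ℕ → Fin 2) :
    #{p ∈ Nplus n χ | p.2 < p.1} =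
      #{p ∈ threeAPs n | χ (p.1 + p.2) ≠ χ (p.1 + 2 * p.2)} := by
  symm
  refine card_bij (fun p _ => (p.1 + 2 * p.2, p.1 + p.2)) ?_ ?_ ?_
  · rintro ⟨a, d⟩ h
    simp only [mem_filter, mem_threeAPs, mem_Nplus] at h ⊢
    refine ⟨⟨⟨by omega, by omega⟩, ⟨by omega, by omega⟩, h.2.symm, by push_cast; omega,
      by push_cast; omega⟩, by omega⟩
  · rintro ⟨a, d⟩ - ⟨a', d'⟩ - h
    simp only [Prod.mk.injEq] at h
    ext <;> simp only <;> omega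
  · rintro ⟨x, b⟩ h
    simp only [mem_filter, mem_Nplus] at h
    obtain ⟨⟨⟨-, hxn⟩, -, hne, h1, -⟩, hlt⟩ := h
    obtain ⟨a, ha⟩ : ∃ a : ℕ, (a : ℤ) = 2 * b - x := ⟨(2 * b - x : ℤ).toNat, by omega⟩
    have hb : a + (x - b) = b := by omega
    have hx : a + 2 * (x - b) = x := by omega
    refine ⟨(a, x - b), ?_, by simp only [hb, hx]⟩
    simp only [mem_filter, mem_threeAPs, hb, hx]
    exact ⟨⟨by omega, by omega, by omega⟩, hne.symm⟩

theorem card_Nplus (n : ℕ) (χ : ℕ → Fin 2) :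
    #(Nplus n χ) = #{p ∈ threeAPs n | χ p.1 ≠ χ (p.1 + p.2)} +
      #{p ∈ threeAPs n | χ (p.1 + p.2) ≠ χ (p.1 + 2 * p.2)} := by
  rw [← card_Nplus_filter_lt, ← card_Nplus_filter_gt,
    ← card_filter_add_card_filter_not (s := Nplus n χ) (fun p => p.1 < p.2)]
  congr 2
  refine filter_congr fun p hp => ?_
  have hne : p.1 ≠ p.2 := fun h => (mem_Nplus.1 hp).2.2.1 (congrArg χ h)
  omega

theorem four_mul_card_filter_mul_card_filter_not_le {α : Type*} (s : Finset α) (P : α → Prop)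
    [DecidablePred P] : 4 * #{x ∈ s | P x} * #{x ∈ s | ¬P x} ≤ #s ^ 2 := by
  have h := four_mul_le_sq_add #{x ∈ s | P x} #{x ∈ s | ¬P x}
  rwa [card_filter_add_card_filter_not] at h

theorem two_mul_card_filter_mod_two_eq_le (n r : ℕ) :
    2 * #{x ∈ Icc 1 n | x % 2 = r} ≤ n + 1 := by
  have h := card_le_card_of_injOn (fun x => (x + 1) / 2)
    (s := {x ∈ Icc 1 n | x % 2 = r}) (t := Icc 1 ((n + 1) / 2))
    (fun x hx => by
      simp only [coe_filter, Set.mem_ofPred_eq, mem_Icc, coe_Icc, Set.mem_Icc] at hx ⊢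
      omega)
    (fun x hx y hy hxy => by
      simp only [coe_filter, Set.mem_ofPred_eq, mem_Icc] at hx hy hxy
      omega)
  rw [Nat.card_Icc] at h
  omega

/-- Sorting `a` and `a + 2d` by colour embeds these progressions into the pairs of equal parity
coloured `(0, 1)`; each parity class of size `m` has at most `m² / 4` of them. -/
theorem eight_mul_card_filter_ne_le (n : ℕ) (χ : ℕ → Fin 2) :
    8 * #{p ∈ threeAPs n | χ p.1 ≠ χ (p.1 + 2 * p.2)} ≤ (n + 1) ^ 2 := by
  set cls : ℕ → Finset ℕ := fun r => {x ∈ Icc 1 n | x % 2 = r}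
  have hinj : #{p ∈ threeAPs n | χ p.1 ≠ χ (p.1 + 2 * p.2)} ≤
      #((range 2).biUnion fun r => {x ∈ cls r | χ x = 0} ×ˢ {x ∈ cls r | ¬χ x = 0}) := by
    refine card_le_card_of_injOn
      (fun p => if χ p.1 = 0 then (p.1, p.1 + 2 * p.2) else (p.1 + 2 * p.2, p.1)) ?_ ?_
    · rintro ⟨a, d⟩ h
      simp only [coe_filter, mem_threeAPs, Set.mem_ofPred_eq] at h
      simp only [cls, coe_biUnion, coe_range, Set.mem_Iio, Set.mem_iUnion, mem_coe, mem_product,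
        mem_filter, mem_Icc]
      refine ⟨a % 2, Nat.mod_lt _ two_pos, ?_⟩
      split_ifs <;> dsimp only <;> omega
    · rintro ⟨a, d⟩ h ⟨a', d'⟩ h' he
      simp only [coe_filter, mem_threeAPs, Set.mem_ofPred_eq] at h h' he
      split_ifs at he <;> simp only [Prod.mk.injEq] at he <;> ext <;> omega
  have hsum := hinj.trans (card_biUnion_le.trans_eq (sum_congr rfl fun r _ => card_product _ _))
  simp only [sum_range_succ, sum_range_zero, zero_add] at hsum
  have h0 := four_mul_card_filter_mul_card_filter_not_le (cls 0) (χ · = 0)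
  have h1 := four_mul_card_filter_mul_card_filter_not_le (cls 1) (χ · = 0)
  have c0 : (2 * #(cls 0)) ^ 2 ≤ (n + 1) ^ 2 :=
    Nat.pow_le_pow_left (two_mul_card_filter_mod_two_eq_le n 0) 2
  have c1 : (2 * #(cls 1)) ^ 2 ≤ (n + 1) ^ 2 :=
    Nat.pow_le_pow_left (two_mul_card_filter_mod_two_eq_le n 1) 2
  linarith

theorem sum_range_div_two_le_card_threeAPs (n : ℕ) :
    ∑ t ∈ range n, t / 2 ≤ #(threeAPs n) := by
  have h := card_le_card_of_injOn (fun x => (x.1 + 1 - 2 * x.2, x.2))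
    (s := (range n).sigma fun t => Icc 1 (t / 2)) (t := threeAPs n)
    (fun x hx => by
      simp only [coe_sigma, Set.mem_sigma_iff, coe_range, Set.mem_Iio, coe_Icc, Set.mem_Icc] at hx
      simp only [mem_coe, mem_threeAPs]
      omega)
    (fun x hx y hy hxy => by
      simp only [coe_sigma, Set.mem_sigma_iff, coe_range, Set.mem_Iio, coe_Icc,
        Set.mem_Icc] at hx hy
      simp only [Prod.mk.injEq] at hxy
      obtain ⟨t, d⟩ := x
      obtain ⟨t', d'⟩ := y
      dsimp only at *
      obtain rfl : d = d' := hxy.2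
      obtain rfl : t = t' := by omega
      rfl)
  simpa only [card_sigma, Nat.card_Icc, Nat.add_sub_cancel] using h

theorem four_mul_sum_range_div_two_add (n : ℕ) :
    4 * ∑ t ∈ range n, t / 2 + 2 * n = n ^ 2 + n % 2 := by
  induction n with
  | zero => rfl
  | succ n ih =>
    have : (n + 1) ^ 2 = n ^ 2 + 2 * n + 1 := by ring
    rw [sum_range_succ]
    omega

theorem sq_le_four_mul_card_threeAPs_add (n : ℕ) : n ^ 2 ≤ 4 * #(threeAPs n) + 2 * n := by
  have := four_mul_sum_range_div_two_add n
  have := sum_range_div_two_le_card_threeAPs n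
  omega

theorem card_Nplus_le_sq (n : ℕ) (χ : ℕ → Fin 2) : #(Nplus n χ) ≤ n ^ 2 :=
  (card_filter_le _ _).trans (by simp [sq])

theorem card_Nplus_le_NplusSup (n : ℕ) (χ : ℕ → Fin 2) : #(Nplus n χ) ≤ NplusSup n :=
  le_csSup ⟨n ^ 2, by rintro _ ⟨χ, rfl⟩; exact card_Nplus_le_sq n χ⟩ ⟨χ, rfl⟩

theorem NplusSup_le_sq (n : ℕ) : NplusSup n ≤ n ^ 2 :=
  csSup_le ⟨_, 0, rfl⟩ (by rintro _ ⟨χ, rfl⟩; exact card_Nplus_le_sq n χ)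

theorem exists_mono3AP_eq_Vmin (n : ℕ) : ∃ χ, mono3AP n χ = Vmin n :=
  Nat.sInf_mem (s := {k | ∃ χ, mono3AP n χ = k}) ⟨_, 0, rfl⟩

theorem Vmin_le_sq (n : ℕ) : Vmin n ≤ n ^ 2 :=
  (Nat.sInf_le (s := {k | ∃ χ, mono3AP n χ = k}) ⟨0, rfl⟩).trans
    ((card_filter_le _ _).trans (by simp [sq]))

theorem three_mul_sq_le_Vmin_NplusSup (n : ℕ) :
    3 * n ^ 2 ≤ 16 * Vmin n + 8 * NplusSup n + 10 * n + 1 := by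
  obtain ⟨χ, hχ⟩ := exists_mono3AP_eq_Vmin n
  have hsum := two_mul_mono3AP_add n χ
  rw [← card_Nplus, hχ] at hsum
  have := eight_mul_card_filter_ne_le n χ
  have := sq_le_four_mul_card_threeAPs_add n
  have := card_Nplus_le_NplusSup n χ
  linarith

theorem sub_le_Vmin_div_sq {n : ℕ} (hn : 1 ≤ n) :
    3 / 16 - (NplusSup n : ℝ) / n ^ 2 / 2 - 1 / n ≤ (Vmin n : ℝ) / n ^ 2 := by
  have hn' : (1 : ℝ) ≤ n := by exact_mod_cast hn
  have key : (3 * n ^ 2 : ℝ) ≤ 16 * Vmin n + 8 * NplusSup n + 10 * n + 1 := by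
    exact_mod_cast three_mul_sq_le_Vmin_NplusSup n
  rw [← sub_nonneg]
  have e : (Vmin n : ℝ) / n ^ 2 - (3 / 16 - NplusSup n / n ^ 2 / 2 - 1 / n) =
      (16 * Vmin n + 8 * NplusSup n + 16 * n - 3 * n ^ 2) / (16 * n ^ 2) := by
    field_simp
    ring
  rw [e]
  exact div_nonneg (by linarith) (by positivity)

theorem natCast_div_sq_le_one {k n : ℕ} (h : k ≤ n ^ 2) : (k : ℝ) / n ^ 2 ≤ 1 :=
  div_le_one_of_le₀ (by exact_mod_cast h) (by positivity)

theorem stmt_0 (c : ℝ)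
    (h : Filter.limsup (fun n : ℕ => (NplusSup n : ℝ) / (n : ℝ) ^ 2) Filter.atTop ≤ c) :
    Filter.liminf (fun n : ℕ => (Vmin n : ℝ) / (n : ℝ) ^ 2) Filter.atTop
      ≥ (1 / 2) * (3 / 8 - c) := by
  have hNsup : IsBoundedUnder (· ≤ ·) atTop fun n : ℕ => (NplusSup n : ℝ) / n ^ 2 :=
    isBoundedUnder_of ⟨1, fun n => natCast_div_sq_le_one (NplusSup_le_sq n)⟩
  have hV : IsCoboundedUnder (· ≥ ·) atTop fun n : ℕ => (Vmin n : ℝ) / n ^ 2 :=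
    isCoboundedUnder_ge_of_le atTop (x := 1) fun n => natCast_div_sq_le_one (Vmin_le_sq n)
  refine le_of_forall_sub_le fun ε hε => le_liminf_of_le hV ?_
  filter_upwards [eventually_lt_of_limsup_lt (h.trans_lt (lt_add_of_pos_right c hε)) hNsup,
    (tendsto_const_div_atTop_nhds_zero_nat 1).eventually_lt_const (half_pos hε),
    eventually_ge_atTop 1] with n hNn hεn hn
  linarith [sub_le_Vmin_div_sq hn]
end

section
/- For every positive integer n and every 2-coloring χ of {1,…,n}, one has 2·V(n,χ) + n = ⌈n²/2⌉ − |N^+(n,χ)| − |T(n,χ)|. -/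
/-- `T(n,χ)`: ordered pairs `(a,b) ∈ {1,…,n}²` with `χ a = 0`, `χ b = 1` and `a + b` even. -/
def Tset (n : ℕ) (χ : ℕ → Fin 2) : Finset (ℕ × ℕ) :=
  (Finset.Icc 1 n ×ˢ Finset.Icc 1 n).filter
    (fun p => χ p.1 = 0 ∧ χ p.2 = 1 ∧ Even (p.1 + p.2))

/-!
Sort the pairs `(x, z) ∈ {1,…,n}²` with `x + z` even, of which there are `⌈n²/2⌉`, by the
colours of `x`, of the midpoint `m = (x + z) / 2` and of `z`. If `χ x ≠ χ m`, then `(x, m)` is a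
pair of `N⁺`, and every pair of `N⁺` arises once this way. If `χ x = χ m ≠ χ z`, ordering the pair
so that its end of colour `0` comes first gives a pair of `T`. If all three colours agree, the pair
is a monochromatic progression read forwards or backwards, or a diagonal pair `x = z`: these are
`2V + n` pairs.
-/

namespace ThreeAP

open Finset

def evenSumPairs (n : ℕ) : Finset (ℕ × ℕ) :=
  {p ∈ Icc 1 n ×ˢ Icc 1 n | Even (p.1 + p.2)}

def mid (p : ℕ × ℕ) : ℕ := (p.1 + p.2) / 2

lemma mem_evenSumPairs {n : ℕ} {p : ℕ × ℕ} :
    p ∈ evenSumPairs n ↔ 1 ≤ p.1 ∧ p.1 ≤ n ∧ 1 ≤ p.2 ∧ p.2 ≤ n ∧ (p.1 + p.2) % 2 = 0 := by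
  simp [evenSumPairs, Nat.even_iff, and_assoc]

lemma mid_swap (p : ℕ × ℕ) : mid p.swap = mid p := by
  simp [mid, add_comm]

lemma card_filter_even_Icc (n : ℕ) : #{x ∈ Icc 1 n | Even x} = n / 2 := by
  rw [← Nat.Ioc_filter_dvd_card_eq_div n 2, ← Icc_add_one_left_eq_Ioc, zero_add]
  simp only [even_iff_two_dvd]

lemma card_filter_odd_Icc (n : ℕ) : #{x ∈ Icc 1 n | Odd x} = (n + 1) / 2 := by
  have := card_filter_add_card_filter_not (s := Icc 1 n) (fun x => Even x)
  simp only [Nat.not_even_iff_odd, card_filter_even_Icc, Nat.card_Icc] at this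
  omega

lemma card_evenSumPairs (n : ℕ) : #(evenSumPairs n) = (n / 2) ^ 2 + ((n + 1) / 2) ^ 2 := by
  have hsplit : evenSumPairs n =
      {x ∈ Icc 1 n | Even x} ×ˢ {x ∈ Icc 1 n | Even x} ∪
        {x ∈ Icc 1 n | Odd x} ×ˢ {x ∈ Icc 1 n | Odd x} := by
    ext p
    simp only [evenSumPairs, mem_union, mem_product, mem_filter, Nat.even_add,
      ← Nat.not_even_iff_odd]
    tauto
  have hdisj : Disjoint ({x ∈ Icc 1 n | Even x} ×ˢ {x ∈ Icc 1 n | Even x})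
      ({x ∈ Icc 1 n | Odd x} ×ˢ {x ∈ Icc 1 n | Odd x}) :=
    disjoint_product.mpr (Or.inl (disjoint_filter.mpr fun x _ h => Nat.not_odd_iff_even.mpr h))
  rw [hsplit, card_union_of_disjoint hdisj, card_product, card_product, card_filter_even_Icc,
    card_filter_odd_Icc, sq, sq]

lemma ceil_sq_div_two (n : ℕ) :
    ⌈(n : ℚ) ^ 2 / 2⌉ = ((n / 2) ^ 2 + ((n + 1) / 2) ^ 2 : ℕ) := by
  rcases Nat.even_or_odd' n with ⟨k, rfl | rfl⟩
  · rw [show 2 * k / 2 = k by omega, show (2 * k + 1) / 2 = k by omega,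
      ← Int.ceil_natCast (R := ℚ)]
    congr 1
    push_cast
    ring
  · rw [show (2 * k + 1) / 2 = k by omega, show (2 * k + 1 + 1) / 2 = k + 1 by omega,
      Int.ceil_eq_iff]
    push_cast
    constructor <;> nlinarith

lemma card_eq_card_filter_lt_add_card_filter_gt_add_card_filter_eq {α : Type*} [LinearOrder α]
    (s : Finset (α × α)) :
    #s = #{p ∈ s | p.1 < p.2} + #{p ∈ s | p.2 < p.1} + #{p ∈ s | p.1 = p.2} := by
  rw [← card_union_of_disjoint, ← card_union_of_disjoint, ← filter_or, ← filter_or,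
    filter_true_of_mem fun p _ => by rcases lt_trichotomy p.1 p.2 with h | h | h <;> simp [h]]
  · simp only [disjoint_union_left, disjoint_filter]
    exact ⟨fun p _ h h' => h.ne h', fun p _ h h' => h.ne' h'⟩
  · exact disjoint_filter.mpr fun p _ h h' => lt_asymm h h'

variable (n : ℕ) (χ : ℕ → Fin 2)

def monoPairs : Finset (ℕ × ℕ) :=
  {p ∈ evenSumPairs n | χ p.1 = χ (mid p) ∧ χ p.1 = χ p.2}

lemma card_monoPairs_filter_lt : #{p ∈ monoPairs n χ | p.1 < p.2} = mono3AP n χ := by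
  unfold mono3AP
  refine card_nbij' (fun p => (p.1, (p.2 - p.1) / 2)) (fun q => (q.1, q.1 + 2 * q.2)) ?_ ?_ ?_ ?_
    <;> intro p hp
    <;> simp only [monoPairs, mem_coe, mem_filter] at hp ⊢
    <;> simp only [mem_evenSumPairs, mid, mem_product, mem_Icc, Prod.ext_iff, true_and] at hp ⊢
  · grind
  · grind
  · omega
  · omega

lemma card_monoPairs_filter_gt_eq_filter_lt :
    #{p ∈ monoPairs n χ | p.2 < p.1} = #{p ∈ monoPairs n χ | p.1 < p.2} := by
  refine card_nbij' Prod.swap Prod.swap ?_ ?_ (fun p _ => rfl) (fun p _ => rfl)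
    <;> intro p hp
    <;> simp only [monoPairs, mem_coe, mem_filter, Prod.fst_swap, Prod.snd_swap, mid_swap] at hp ⊢
    <;> simp only [mem_evenSumPairs, Prod.fst_swap, Prod.snd_swap] at hp ⊢
    <;> grind

lemma card_monoPairs_filter_eq : #{p ∈ monoPairs n χ | p.1 = p.2} = n := by
  calc #{p ∈ monoPairs n χ | p.1 = p.2} = #(Icc 1 n) := by
        refine card_nbij' Prod.fst (fun a => (a, a)) ?_ ?_ ?_ ?_
          <;> intro p hp
          <;> simp only [monoPairs, mem_coe, mem_filter] at hp ⊢
          <;> simp only [mem_evenSumPairs, mid, mem_Icc, Prod.ext_iff, true_and] at hp ⊢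
        · omega
        · grind
        · exact hp.2
    _ = n := by simp

lemma card_monoPairs : #(monoPairs n χ) = 2 * mono3AP n χ + n := by
  rw [card_eq_card_filter_lt_add_card_filter_gt_add_card_filter_eq,
    card_monoPairs_filter_gt_eq_filter_lt,
    card_monoPairs_filter_lt, card_monoPairs_filter_eq]
  ring

lemma card_evenSumPairs_filter_ne_mid :
    #{p ∈ evenSumPairs n | χ p.1 ≠ χ (mid p)} = #(Nplus n χ) := by
  refine card_nbij' (fun p => (p.1, mid p)) (fun q => (q.1, 2 * q.2 - q.1)) ?_ ?_ ?_ ?_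
    <;> intro p hp
    <;> simp only [Nplus, mem_coe, mem_filter] at hp ⊢
    <;> simp only [mem_evenSumPairs, mid, mem_product, mem_Icc, Prod.ext_iff, true_and] at hp ⊢
  · grind
  · grind
  · omega
  · omega

-- `χ x = χ m`, so the colour of the midpoint tells the inverse map whether the pair was swapped.
lemma card_evenSumPairs_filter_eq_mid_ne :
    #{p ∈ evenSumPairs n | χ p.1 = χ (mid p) ∧ χ p.1 ≠ χ p.2} = #(Tset n χ) := by
  refine card_nbij' (fun p => if χ p.1 = 0 then p else p.swap)
    (fun q => if χ (mid q) = 0 then q else q.swap) ?_ ?_ ?_ ?_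
    <;> intro p hp
    <;> simp only [Tset, mem_coe, mem_filter] at hp ⊢
    <;> simp only [mem_evenSumPairs, mid, mem_product, mem_Icc, Nat.even_iff] at hp ⊢
  all_goals grind

lemma card_evenSumPairs_eq_add :
    #(evenSumPairs n) = 2 * mono3AP n χ + n + #(Nplus n χ) + #(Tset n χ) := by
  have hmid := card_filter_add_card_filter_not (s := evenSumPairs n) (fun p => χ p.1 = χ (mid p))
  have hend := card_filter_add_card_filter_not (s := {p ∈ evenSumPairs n | χ p.1 = χ (mid p)})
    (fun p => χ p.1 = χ p.2)
  rw [filter_filter, filter_filter] at hend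
  rw [← card_monoPairs, ← card_evenSumPairs_filter_ne_mid, ← card_evenSumPairs_filter_eq_mid_ne,
    monoPairs]
  simp only [ne_eq]
  omega

end ThreeAP

theorem stmt_7_general (n : ℕ) (χ : ℕ → Fin 2) :
    (2 * mono3AP n χ + n : ℤ) =
      ⌈((n : ℚ) ^ 2 / 2)⌉ - (Nplus n χ).card - (Tset n χ).card := by
  rw [ThreeAP.ceil_sq_div_two, ← ThreeAP.card_evenSumPairs, ThreeAP.card_evenSumPairs_eq_add n χ]
  push_cast
  ring

theorem stmt_7 (n : ℕ) (hn : 0 < n) (χ : ℕ → Fin 2) :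
    (2 * mono3AP n χ + n : ℤ) =
      ⌈((n : ℚ) ^ 2 / 2)⌉ - (Nplus n χ).card - (Tset n χ).card :=
  stmt_7_general n χ
end
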